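/- arXiv:1712.09035 — 3 statements merged into one kernel-verified Lean document; each statement's English description precedes it below -/
import Mathlib

section
/- Let I be a finite index set and S : I → subsets of {1,…,k} a family of subsets of {1,…,k} such that every element of {1,…,k} is contained in exactly h members of the family (counted with multiplicity over I). Then Σ_{i∈I} H(Y_{S(i)} | X) ≥ h · H(Y_{[k]} | X). -/
open Finset

/-- Probability that the finitely-valued random variable `X` takes value `x`,
with respect to the probability mass function `p` on the finite sample space `Ω`. -/
noncomputable def pmfProb {Ω : Type*} [Fintype Ω] {α : Type*} [Fintype α] [DecidableEq α]
    (p : Ω → ℝ) (X : Ω → α) (x : α) : ℝ :=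
  ∑ ω, if X ω = x then p ω else 0

/-- Shannon entropy (natural logarithm) of the random variable `X`. -/
noncomputable def entH {Ω : Type*} [Fintype Ω] {α : Type*} [Fintype α] [DecidableEq α]
    (p : Ω → ℝ) (X : Ω → α) : ℝ :=
  ∑ x, Real.negMulLog (pmfProb p X x)

/-- Conditional Shannon entropy `H(X|Y) = H(X,Y) - H(Y)`. -/
noncomputable def condH {Ω : Type*} [Fintype Ω] {α β : Type*} [Fintype α] [DecidableEq α]
    [Fintype β] [DecidableEq β] (p : Ω → ℝ) (X : Ω → α) (Y : Ω → β) : ℝ :=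
  entH p (fun ω => (X ω, Y ω)) - entH p Y

/-- Mutual information `I(X;Y) = H(X) + H(Y) - H(X,Y)`. -/
noncomputable def mutInfo {Ω : Type*} [Fintype Ω] {α β : Type*} [Fintype α] [DecidableEq α]
    [Fintype β] [DecidableEq β] (p : Ω → ℝ) (X : Ω → α) (Y : Ω → β) : ℝ :=
  entH p X + entH p Y - entH p (fun ω => (X ω, Y ω))

/-- The conditional probability mass function given an event `E`. -/
noncomputable def condPMF {Ω : Type*} [Fintype Ω] (p : Ω → ℝ) (E : Ω → Prop)
    [DecidablePred E] : Ω → ℝ :=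
  fun ω => if E ω then p ω / (∑ ω' ∈ Finset.univ.filter E, p ω') else 0

/-!
Order the coordinates. By the chain rule, `H(Y_T | X) = ∑_{j ∈ T} H(Y_j | Y_{T ∩ [<j]}, X)`, and
since conditioning on more information lowers entropy, every term is at least
`H(Y_j | Y_{[<j]}, X)`; for `T = [k]` this is an equality. Summing over the family, each `j` is
counted exactly `h` times, which gives `h · H(Y_{[k]} | X)`. That conditioning lowers entropy is
Gibbs' inequality `log x ≤ x - 1`, applied against the law under which the two variables are
conditionally independent given the third. -/

theorem sum_sum_mem_eq_nsmul_sum {ι κ M : Type*} [Fintype ι] [Fintype κ] [DecidableEq κ]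
    [AddCommMonoid M] {S : ι → Finset κ} {h : ℕ} (hS : ∀ a, #{i | a ∈ S i} = h) (f : κ → M) :
    ∑ i, ∑ j ∈ S i, f j = h • ∑ j, f j := by
  rw [sum_comm' (t' := univ) (s' := fun j => {i | j ∈ S i}) (by simp), smul_sum]
  simp [hS]

/-- The subtuple `Y_T`, padded with `none` off `T` so that all subtuples live in one type. -/
def tupleOn {Ω α κ : Type*} [DecidableEq κ] (Y : κ → Ω → α) (T : Finset κ) (ω : Ω) :
    κ → Option α :=
  fun j => if j ∈ T then some (Y j ω) else none

lemma tupleOn_eq_iff {Ω α κ : Type*} [DecidableEq κ] {Y : κ → Ω → α} {T : Finset κ}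
    {ω ω' : Ω} : tupleOn Y T ω' = tupleOn Y T ω ↔ ∀ j ∈ T, Y j ω' = Y j ω := by
  simp only [tupleOn, funext_iff]
  refine forall_congr' fun j => ?_
  split_ifs <;> simp [*]

section Entropy

variable {Ω α β γ δ : Type*} [Fintype Ω] [Fintype α] [DecidableEq α] [Fintype β] [DecidableEq β]
  [Fintype γ] [DecidableEq γ] [Fintype δ] [DecidableEq δ] (p : Ω → ℝ)

lemma pmfProb_nonneg (hp : ∀ ω, 0 ≤ p ω) (A : Ω → α) (x : α) : 0 ≤ pmfProb p A x :=
  sum_nonneg fun ω _ => by split_ifs <;> simp [hp ω]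

lemma le_pmfProb_self (hp : ∀ ω, 0 ≤ p ω) (A : Ω → α) (ω : Ω) : p ω ≤ pmfProb p A (A ω) := by
  simpa [pmfProb] using single_le_sum (f := fun ω' => if A ω' = A ω then p ω' else 0)
    (fun ω' _ => by split_ifs <;> simp [hp ω']) (mem_univ ω)

lemma sum_mul_pmfProb (A : Ω → α) (G : α → ℝ) :
    ∑ x, pmfProb p A x * G x = ∑ ω, p ω * G (A ω) := by
  simp only [pmfProb, sum_mul, ite_mul, zero_mul]
  rw [sum_comm]
  simp

lemma sum_pmfProb (hp1 : ∑ ω, p ω = 1) (A : Ω → α) : ∑ x, pmfProb p A x = 1 := by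
  simpa [hp1] using sum_mul_pmfProb p A fun _ => 1

lemma sum_pmfProb_prod_left (A : Ω → α) (B : Ω → β) (b : β) :
    ∑ a, pmfProb p (fun ω => (A ω, B ω)) (a, b) = pmfProb p B b := by
  simp only [pmfProb, Prod.mk.injEq, ite_and]
  rw [sum_comm]
  simp

lemma entH_eq_neg_sum_log (A : Ω → α) :
    entH p A = -∑ ω, p ω * Real.log (pmfProb p A (A ω)) := by
  rw [← sum_mul_pmfProb p A fun x => Real.log (pmfProb p A x), entH, ← sum_neg_distrib]
  simp [Real.negMulLog]

lemma entH_congr {A : Ω → α} {B : Ω → β} (h : ∀ ω ω', A ω' = A ω ↔ B ω' = B ω) :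
    entH p A = entH p B := by
  simp only [entH_eq_neg_sum_log, pmfProb, h]

lemma condH_congr {A : Ω → α} {A' : Ω → β} {B : Ω → γ} {B' : Ω → δ}
    (hA : ∀ ω ω', A ω' = A ω ↔ A' ω' = A' ω) (hB : ∀ ω ω', B ω' = B ω ↔ B' ω' = B' ω) :
    condH p A B = condH p A' B' := by
  unfold condH
  rw [entH_congr p hB, entH_congr p (A := fun ω => (A ω, B ω)) (B := fun ω => (A' ω, B' ω))
    (by simp [hA, hB])]

lemma sum_mul_div_pmfProb_le (hp : ∀ ω, 0 ≤ p ω) (A : Ω → α) {F : α → ℝ} (hF : ∀ x, 0 ≤ F x) :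
    ∑ ω, p ω * (F (A ω) / pmfProb p A (A ω)) ≤ ∑ x, F x := by
  rw [← sum_mul_pmfProb p A fun x => F x / pmfProb p A x]
  refine sum_le_sum fun x _ => ?_
  rcases (pmfProb_nonneg p hp A x).eq_or_lt with h0 | hpos
  · simp [← h0, hF x]
  · rw [mul_div_cancel₀ _ hpos.ne']

lemma mul_sub_le_mul_log {q a b c d : ℝ} (hq : 0 ≤ q) (ha : q ≤ a) (hb : q ≤ b) (hc : q ≤ c)
    (hd : q ≤ d) :
    q * (1 - c * d / (a * b)) ≤ q * (Real.log a + Real.log b - Real.log c - Real.log d) := by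
  rcases hq.eq_or_lt with rfl | hq
  · simp
  have ha := hq.trans_le ha
  have hb := hq.trans_le hb
  have hc := hq.trans_le hc
  have hd := hq.trans_le hd
  refine mul_le_mul_of_nonneg_left ?_ hq.le
  have := Real.log_le_sub_one_of_pos (show 0 < c * d / (a * b) by positivity)
  rw [Real.log_div (by positivity) (by positivity), Real.log_mul hc.ne' hd.ne',
    Real.log_mul ha.ne' hb.ne'] at this
  linarith

/-- The joint law of `(U, V, W)` that makes `U` and `V` conditionally independent given `W`. -/
noncomputable def condIndepCoupling (U : Ω → α) (V : Ω → β) (W : Ω → γ) (x : α × β × γ) : ℝ :=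
  pmfProb p (fun ω => (U ω, W ω)) (x.1, x.2.2) * pmfProb p (fun ω => (V ω, W ω)) x.2
    / pmfProb p W x.2.2

lemma sum_condIndepCoupling (hp1 : ∑ ω, p ω = 1) (U : Ω → α) (V : Ω → β) (W : Ω → γ) :
    ∑ x, condIndepCoupling p U V W x = 1 := by
  calc ∑ x, condIndepCoupling p U V W x
      = ∑ w, (∑ u, pmfProb p (fun ω => (U ω, W ω)) (u, w))
          * (∑ v, pmfProb p (fun ω => (V ω, W ω)) (v, w)) / pmfProb p W w := by
        simp only [condIndepCoupling, Fintype.sum_prod_type, sum_mul_sum, sum_div]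
        exact (sum_congr rfl fun _ _ => sum_comm).trans sum_comm
    _ = ∑ w, pmfProb p W w := by
        simp only [sum_pmfProb_prod_left, mul_self_div_self]
    _ = 1 := sum_pmfProb p hp1 W

lemma entH_submodular (hp : ∀ ω, 0 ≤ p ω) (hp1 : ∑ ω, p ω = 1)
    (U : Ω → α) (V : Ω → β) (W : Ω → γ) :
    entH p (fun ω => (U ω, V ω, W ω)) + entH p W
      ≤ entH p (fun ω => (U ω, W ω)) + entH p (fun ω => (V ω, W ω)) := by
  have hlog := sum_le_sum fun ω (_ : ω ∈ univ) => mul_sub_le_mul_log (hp ω)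
    (le_pmfProb_self p hp (fun ω => (U ω, V ω, W ω)) ω) (le_pmfProb_self p hp W ω)
    (le_pmfProb_self p hp (fun ω => (U ω, W ω)) ω) (le_pmfProb_self p hp (fun ω => (V ω, W ω)) ω)
  have hmass : ∑ ω, p ω * (pmfProb p (fun ω => (U ω, W ω)) (U ω, W ω)
      * pmfProb p (fun ω => (V ω, W ω)) (V ω, W ω)
      / (pmfProb p (fun ω => (U ω, V ω, W ω)) (U ω, V ω, W ω) * pmfProb p W (W ω))) ≤ 1 := by
    calc _ = ∑ ω, p ω * (condIndepCoupling p U V W (U ω, V ω, W ω)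
          / pmfProb p (fun ω => (U ω, V ω, W ω)) (U ω, V ω, W ω)) := by
          refine sum_congr rfl fun ω _ => ?_
          simp only [condIndepCoupling]
          ring
      _ ≤ ∑ x, condIndepCoupling p U V W x := sum_mul_div_pmfProb_le p hp _ fun x =>
          div_nonneg (mul_nonneg (pmfProb_nonneg p hp _ _) (pmfProb_nonneg p hp _ _))
            (pmfProb_nonneg p hp _ _)
      _ = 1 := sum_condIndepCoupling p hp1 U V W
  simp only [mul_sub, mul_add, mul_one, sum_sub_distrib, sum_add_distrib, hp1] at hlog
  simp only [entH_eq_neg_sum_log]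
  linarith

lemma condH_prod_le (hp : ∀ ω, 0 ≤ p ω) (hp1 : ∑ ω, p ω = 1)
    (U : Ω → α) (V : Ω → β) (W : Ω → γ) :
    condH p U (fun ω => (V ω, W ω)) ≤ condH p U W := by
  have := entH_submodular p hp hp1 U V W
  unfold condH
  linarith

lemma condH_le_of_determines (hp : ∀ ω, 0 ≤ p ω) (hp1 : ∑ ω, p ω = 1) (U : Ω → α)
    {B : Ω → β} {C : Ω → γ} (hBC : ∀ ω ω', B ω' = B ω → C ω' = C ω) :
    condH p U B ≤ condH p U C := by
  calc condH p U B = condH p U (fun ω => (B ω, C ω)) :=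
        condH_congr p (fun _ _ => Iff.rfl) fun ω ω' => by
          simpa using fun h => hBC ω ω' h
    _ ≤ condH p U C := condH_prod_le p hp hp1 U B C

section Chain

variable {κ : Type*} [Fintype κ] [DecidableEq κ] (Y : κ → Ω → α) (X : Ω → β)

lemma condH_tupleOn_empty : condH p (tupleOn Y ∅) X = 0 := by
  rw [condH, entH_congr p (B := X) (by simp [tupleOn_eq_iff]), sub_self]

lemma condH_tupleOn_insert (a : κ) (T : Finset κ) :
    condH p (tupleOn Y (insert a T)) X
      = condH p (tupleOn Y T) X + condH p (Y a) (fun ω => (tupleOn Y T ω, X ω)) := by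
  have h : entH p (fun ω => (tupleOn Y (insert a T) ω, X ω))
      = entH p (fun ω => (Y a ω, tupleOn Y T ω, X ω)) :=
    entH_congr p (by simp [tupleOn_eq_iff, and_assoc])
  simp only [condH, h]
  ring

lemma condH_tupleOn_eq_sum [LinearOrder κ] (T : Finset κ) :
    condH p (tupleOn Y T) X
      = ∑ j ∈ T, condH p (Y j) (fun ω => (tupleOn Y {i ∈ T | i < j} ω, X ω)) := by
  induction T using Finset.induction_on_max with
  | empty => simp [condH_tupleOn_empty]
  | insert a s has ih =>
    have hfilter_a : {i ∈ insert a s | i < a} = s := by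
      rw [filter_insert, if_neg (lt_irrefl a), filter_true_of_mem has]
    have hfilter : ∀ j ∈ s, {i ∈ insert a s | i < j} = {i ∈ s | i < j} := fun j hj => by
      rw [filter_insert, if_neg (fun haj => (haj.trans (has j hj)).false)]
    rw [condH_tupleOn_insert, ih, sum_insert fun ha => lt_irrefl a (has a ha), add_comm,
      hfilter_a]
    exact congrArg _ (sum_congr rfl fun j hj => by rw [hfilter j hj])

lemma sum_condH_le_condH_tupleOn [LinearOrder κ] (hp : ∀ ω, 0 ≤ p ω) (hp1 : ∑ ω, p ω = 1)
    (T : Finset κ) :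
    ∑ j ∈ T, condH p (Y j) (fun ω => (tupleOn Y {i | i < j} ω, X ω))
      ≤ condH p (tupleOn Y T) X := by
  rw [condH_tupleOn_eq_sum]
  refine sum_le_sum fun j _ => condH_le_of_determines p hp hp1 _ fun ω ω' h => ?_
  simp only [Prod.mk.injEq, tupleOn_eq_iff, mem_filter, mem_univ, true_and] at h ⊢
  exact ⟨fun i hi => h.1 i hi.2, h.2⟩

end Chain

end Entropy

theorem sum_condEntropy_cover_ge_general {Ω α β ι : Type*} [Fintype Ω] [Fintype α] [DecidableEq α]
    [Fintype β] [DecidableEq β] [Fintype ι]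
    (p : Ω → ℝ) (hp : ∀ ω, 0 ≤ p ω) (hp1 : ∑ ω, p ω = 1)
    (k h : ℕ)
    (X : Ω → β) (Y : Fin k → Ω → α)
    (S : ι → Finset (Fin k))
    (hS : ∀ a : Fin k, (Finset.univ.filter (fun i => a ∈ S i)).card = h) :
    (h : ℝ) * condH p (fun ω (j : Fin k) => Y j ω) X
      ≤ ∑ i, condH p (fun ω (j : ↥(S i)) => Y j.1 ω) X := by
  set c : Fin k → ℝ := fun j => condH p (Y j) (fun ω => (tupleOn Y {i | i < j} ω, X ω))
  have hfull : condH p (fun ω (j : Fin k) => Y j ω) X = ∑ j, c j := by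
    rw [← condH_tupleOn_eq_sum]
    exact condH_congr p (fun _ _ => by rw [tupleOn_eq_iff]; simp [funext_iff]) fun _ _ => Iff.rfl
  have hpart (i : ι) : ∑ j ∈ S i, c j ≤ condH p (fun ω (j : ↥(S i)) => Y j.1 ω) X :=
    (sum_condH_le_condH_tupleOn p Y X hp hp1 (S i)).trans_eq <|
      condH_congr p (fun _ _ => by rw [tupleOn_eq_iff]; simp [funext_iff]) fun _ _ => Iff.rfl
  calc (h : ℝ) * condH p (fun ω (j : Fin k) => Y j ω) X = ∑ i, ∑ j ∈ S i, c j := by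
        rw [hfull, sum_sum_mem_eq_nsmul_sum hS, nsmul_eq_mul]
    _ ≤ _ := sum_le_sum fun i _ => hpart i

/-- if every element of `{1,…,k}` is contained in exactly `h` members
(counted with multiplicity over the finite index set `ι`) of the family
`S : ι → Finset (Fin k)`, then `∑ i, H(Y_{S i} | X) ≥ h * H(Y_{[k]} | X)`. -/
theorem sum_condEntropy_cover_ge {Ω α β ι : Type*} [Fintype Ω] [Fintype α] [DecidableEq α]
    [Fintype β] [DecidableEq β] [Fintype ι]
    (p : Ω → ℝ) (hp : ∀ ω, 0 ≤ p ω) (hp1 : ∑ ω, p ω = 1)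
    (k h : ℕ) (hk : 0 < k) (hh : 0 < h)
    (X : Ω → β) (Y : Fin k → Ω → α)
    (S : ι → Finset (Fin k))
    (hS : ∀ a : Fin k, (Finset.univ.filter (fun i => a ∈ S i)).card = h) :
    (h : ℝ) * condH p (fun ω (j : Fin k) => Y j ω) X
      ≤ ∑ i, condH p (fun ω (j : ↥(S i)) => Y j.1 ω) X :=
  sum_condEntropy_cover_ge_general p hp hp1 k h X Y S hS
end

section
/- For every prime power q = p^e (p prime, e ≥ 1) and all natural numbers k > r ≥ 1, there exist a natural number n and vectors v_1,…,v_r in F^k, where F is a finite field with q^n elements (an extension of F_q), such that v_{i,j} = δ_{i,j} for all 1 ≤ i ≤ r and 1 ≤ j ≤ r, and for every injective function t from {1,…,r} to {1,…,k} the r × r matrix (v_{i, t(j)})_{1 ≤ i,j ≤ r} is invertible. -/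
open Finset

/-!
Choose `k` distinct points `x_j` of a field with at least `k` elements and take the `r × k`
matrix `M i j = x_j ^ i`. Each of its `r × r` column submatrices is a transposed Vandermonde
matrix on distinct nodes, hence invertible. Multiplying `M` on the left by the inverse of its
first `r` columns makes those columns the identity without changing which minors vanish.
A Galois field `GF(p ^ (e * k))` has `p ^ (e * k) ≥ k` elements.
-/

open Function

namespace Matrix

theorem isUnit_det_submatrix_pow {K κ : Type*} [Field K] {r : ℕ} {x : κ → K}
    (hx : Injective x) {s : Fin r → κ} (hs : Injective s) :
    IsUnit ((of fun (i : Fin r) j => x j ^ (i : ℕ)).submatrix id s).det := by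
  have hT : (of fun (i : Fin r) j => x j ^ (i : ℕ)).submatrix id s = (vandermonde (x ∘ s))ᵀ := by
    ext i j
    rfl
  rw [hT, det_transpose, isUnit_iff_ne_zero]
  exact det_vandermonde_ne_zero_iff.mpr (hx.comp hs)

theorem exists_submatrix_eq_one_of_isUnit_det_submatrix {R m κ : Type*} [CommRing R]
    [Fintype m] [DecidableEq m] {M : Matrix m κ R}
    (hM : ∀ s : m → κ, Injective s → IsUnit (M.submatrix id s).det) {c : m → κ}
    (hc : Injective c) :
    ∃ N : Matrix m κ R, N.submatrix id c = 1 ∧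
      ∀ s : m → κ, Injective s → IsUnit (N.submatrix id s).det := by
  set A := M.submatrix id c
  have hA : IsUnit A.det := hM c hc
  have hmul (s : m → κ) : (A⁻¹ * M).submatrix id s = A⁻¹ * M.submatrix id s := rfl
  refine ⟨A⁻¹ * M, ?_, fun s hs => ?_⟩
  · rw [hmul, nonsing_inv_mul A hA]
  · rw [hmul, det_mul]
    exact (isUnit_nonsing_inv_det A hA).mul (hM s hs)

end Matrix

theorem GaloisField.nonempty_fin_embedding (p : ℕ) [Fact p.Prime] {n k : ℕ} (hn : n ≠ 0)
    (hk : k ≤ p ^ n) : Nonempty (Fin k ↪ GaloisField p n) := by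
  have := Fintype.ofFinite (GaloisField p n)
  apply Function.Embedding.nonempty_of_card_le
  rwa [Fintype.card_fin, ← Nat.card_eq_fintype_card, GaloisField.card p n hn]

theorem exists_wiretapII_vectors_general (p e k r : ℕ) [hp : Fact p.Prime]
    (he : 1 ≤ e) (hrk : r < k) :
    ∃ n : ℕ, 0 < n ∧
      ∃ v : Fin r → Fin k → GaloisField p (e * n),
        (∀ i j : Fin r, v i (Fin.castLE hrk.le j) = if i = j then 1 else 0) ∧
        ∀ t : Fin r → Fin k, Function.Injective t →
          IsUnit (Matrix.of fun i j : Fin r => v i (t j)).det := by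
  refine ⟨k, by omega, ?_⟩
  have hk : k ≤ p ^ (e * k) :=
    calc k ≤ 2 ^ k := Nat.lt_two_pow_self.le
      _ ≤ 2 ^ (e * k) := Nat.pow_le_pow_right two_pos (Nat.le_mul_of_pos_left k he)
      _ ≤ p ^ (e * k) := Nat.pow_le_pow_left hp.out.two_le _
  obtain ⟨x⟩ := GaloisField.nonempty_fin_embedding p (Nat.mul_ne_zero (by omega) (by omega)) hk
  obtain ⟨N, hN, hminors⟩ := Matrix.exists_submatrix_eq_one_of_isUnit_det_submatrix
    (fun s hs => Matrix.isUnit_det_submatrix_pow (r := r) x.injective hs)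
    (Fin.castLE_injective hrk.le)
  exact ⟨N, fun i j => by rw [← Matrix.one_apply, ← hN]; rfl, hminors⟩

/-- paper's Lemma 4 / `L425`: for every prime power `q = p ^ e` and all
naturals `k > r ≥ 1`, there exist `n ≥ 1` and vectors `v 1, …, v r` in `F ^ k`, where
`F` is the Galois field with `q ^ n = p ^ (e * n)` elements, such that
`v i j = δ i j` on the first `r` coordinates and, for every injective
`t : Fin r → Fin k`, the `r × r` matrix `(v i (t j))` is invertible. -/
theorem exists_wiretapII_vectors (p e k r : ℕ) [hp : Fact p.Prime]
    (he : 1 ≤ e) (hr : 1 ≤ r) (hrk : r < k) :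
    ∃ n : ℕ, 0 < n ∧
      ∃ v : Fin r → Fin k → GaloisField p (e * n),
        (∀ i j : Fin r, v i (Fin.castLE hrk.le j) = if i = j then 1 else 0) ∧
        ∀ t : Fin r → Fin k, Function.Injective t →
          IsUnit (Matrix.of fun i j : Fin r => v i (t j)).det :=
  exists_wiretapII_vectors_general p e k r (hp := hp) he hrk
end

section
/- Let F be a finite field, let k > r ≥ 1, and let v_1,…,v_r ∈ F^k satisfy v_{i,j} = δ_{i,j} for 1 ≤ i,j ≤ r and the property that for every injective t : {1,…,r} → {1,…,k} the r × r matrix (v_{i,t(j)})_{i,j} is invertible. For a message m ∈ F^{k−r} and randomness ℓ ∈ F^r, define the codeword Y(m,ℓ) ∈ F^k by Y_j = ℓ_j for 1 ≤ j ≤ r and Y_j = m_{j−r} + Σ_{j'=1}^{r} v_{j',j} ℓ_{j'} for r+1 ≤ j ≤ k. Then for every m ∈ F^{k−r} and every injective t : {1,…,r} → {1,…,k}, the map F^r → F^r sending ℓ to (Y_{t(1)}(m,ℓ),…,Y_{t(r)}(m,ℓ)) is a bijection; consequently, when ℓ is uniformly distributed and independent of the message, any r eavesdropped coordinates of the codeword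 are uniformly distributed and carry no information about m. -/
open Finset

/-- The wiretap channel II codeword: `Y j = l j` for `j < r` and
`Y j = m (j - r) + ∑ i, v i j * l i` for `r ≤ j < k` (0-indexed). -/
noncomputable def codeword {F : Type*} [Field F] {k r : ℕ} (v : Fin r → Fin k → F)
    (m : Fin (k - r) → F) (l : Fin r → F) (j : Fin k) : F :=
  if h : (j : ℕ) < r then l ⟨j, h⟩
  else m ⟨(j : ℕ) - r, by have := j.isLt; omega⟩ + ∑ i, v i j * l i

/-
By the unit vectors `v_{i,j} = δ_{i,j}`, every coordinate of the codeword is affine in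
the randomness, `Y_j(m, ℓ) = Y_j(m, 0) + Σ_i ℓ_i v_{i,j}`, so the eavesdropped coordinates are
`Y_t(m, 0) + ℓ V_t` with `V_t` the invertible matrix `(v_{i,t(j)})`: a bijection in `ℓ`.
Hence `(m, ℓ) ↦ (m, Y_t(m, ℓ))` is a bijection of the uniform sample space, so the pair
`(M, Z_t)` is uniform, and then so are its marginals. Uniform marginals of a uniform pair have
entropies adding up to the joint entropy, i.e. zero mutual information.
-/

open Function Matrix

section Uniform

variable {Ω α β : Type*} [Fintype Ω] [Fintype α] [Fintype β]

theorem pmfProb_comp_of_bijective [DecidableEq α] (p : Ω → ℝ) (X : Ω → α) {e : Ω → Ω}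
    (he : Bijective e) (hp : ∀ ω, p (e ω) = p ω) (x : α) :
    pmfProb p (X ∘ e) x = pmfProb p X x :=
  Fintype.sum_bijective e he _ _ fun ω => by simp only [Function.comp_apply, hp]

theorem pmfProb_const_of_bijective [DecidableEq α] (c : ℝ) {X : Ω → α} (hX : Bijective X)
    (x : α) :
    pmfProb (fun _ => c) X x = c := by
  rw [pmfProb, Fintype.sum_bijective X hX _ (fun y => if y = x then c else 0) fun _ => rfl]
  simp

theorem pmfProb_uniform_fst [DecidableEq α] [Nonempty β] (a : α) :
    pmfProb (fun _ : α × β => (Fintype.card (α × β) : ℝ)⁻¹) Prod.fst a =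
      (Fintype.card α : ℝ)⁻¹ := by
  rw [pmfProb, Fintype.sum_prod_type, Finset.sum_comm]
  simp [Fintype.card_prod]

theorem pmfProb_uniform_snd [DecidableEq β] [Nonempty α] (b : β) :
    pmfProb (fun _ : α × β => (Fintype.card (α × β) : ℝ)⁻¹) Prod.snd b =
      (Fintype.card β : ℝ)⁻¹ := by
  simp [pmfProb, Fintype.sum_prod_type, Fintype.card_prod, mul_comm]

theorem entH_eq_log_card_of_uniform [DecidableEq α] (p : Ω → ℝ) (X : Ω → α)
    (hX : ∀ x, pmfProb p X x = (Fintype.card α : ℝ)⁻¹) :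
    entH p X = Real.log (Fintype.card α) := by
  simp only [entH, hX, Finset.sum_const, Finset.card_univ, nsmul_eq_mul, Real.negMulLog,
    Real.log_inv]
  rcases eq_or_ne (Fintype.card α : ℝ) 0 with h | h
  · simp [h]
  · field_simp

theorem mutInfo_eq_zero_of_uniform [DecidableEq α] [DecidableEq β] [Nonempty α] [Nonempty β]
    (p : Ω → ℝ) (X : Ω → α) (Y : Ω → β)
    (hX : ∀ a, pmfProb p X a = (Fintype.card α : ℝ)⁻¹)
    (hY : ∀ b, pmfProb p Y b = (Fintype.card β : ℝ)⁻¹)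
    (hXY : ∀ ab, pmfProb p (fun ω => (X ω, Y ω)) ab = (Fintype.card (α × β) : ℝ)⁻¹) :
    mutInfo p X Y = 0 := by
  rw [mutInfo, entH_eq_log_card_of_uniform p X hX, entH_eq_log_card_of_uniform p Y hY,
    entH_eq_log_card_of_uniform _ _ hXY, Fintype.card_prod, Nat.cast_mul,
    Real.log_mul (by positivity) (by positivity), sub_self]

end Uniform

theorem bijective_fst_prodMk {α β γ : Type*} {f : α → β → γ}
    (hf : ∀ a, Bijective (f a)) :
    Bijective fun ω : α × β => (ω.1, f ω.1 ω.2) :=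
  (Equiv.prodShear (Equiv.refl α) fun a => Equiv.ofBijective _ (hf a)).bijective

theorem Matrix.bijective_add_vecMul {n R : Type*} [Fintype n] [DecidableEq n] [CommRing R]
    (c : n → R) {A : Matrix n n R} (hA : IsUnit A.det) : Bijective fun l => c + l ᵥ* A := by
  rw [← isUnit_iff_isUnit_det] at hA
  exact (Equiv.addLeft c).bijective.comp
    ⟨vecMul_injective_of_isUnit hA, vecMul_surjective_iff_isUnit.mpr hA⟩

section Codeword

variable {F : Type*} [Field F] {k r : ℕ} {v : Fin r → Fin k → F} (hrk : r ≤ k)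
  (hv : ∀ i j : Fin r, v i (Fin.castLE hrk j) = if i = j then 1 else 0)
include hv

theorem codeword_eq_add_sum (m : Fin (k - r) → F) (l : Fin r → F) (j : Fin k) :
    codeword v m l j = codeword v m 0 j + ∑ i, l i * v i j := by
  unfold codeword
  split_ifs with hj
  · have hvj : ∀ i, v i j = if i = ⟨j, hj⟩ then 1 else 0 := fun i => hv i ⟨j, hj⟩
    simp [hvj]
  · simp [mul_comm]

theorem codeword_comp_eq_add_vecMul (m : Fin (k - r) → F) (t : Fin r → Fin k)
    (l : Fin r → F) :
    (fun i => codeword v m l (t i)) =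
      (fun i => codeword v m 0 (t i)) + l ᵥ* of fun i j => v i (t j) := by
  ext j
  simp [codeword_eq_add_sum hrk hv m l, vecMul, dotProduct]

theorem bijective_codeword_comp (m : Fin (k - r) → F) {t : Fin r → Fin k}
    (ht : IsUnit (of fun i j => v i (t j)).det) :
    Bijective fun l i => codeword v m l (t i) := by
  convert bijective_add_vecMul (fun i => codeword v m 0 (t i)) ht using 1
  exact funext (codeword_comp_eq_add_vecMul hrk hv m t)

end Codeword

theorem wiretapII_secrecy_general {F : Type*} [Field F] [Fintype F] [DecidableEq F]
    (k r : ℕ) (hrk : r < k)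
    (v : Fin r → Fin k → F)
    (hv : ∀ i j : Fin r, v i (Fin.castLE hrk.le j) = if i = j then 1 else 0)
    (hinv : ∀ t : Fin r → Fin k, Function.Injective t →
      IsUnit (Matrix.of fun i j : Fin r => v i (t j)).det) :
    (∀ (m : Fin (k - r) → F) (t : Fin r → Fin k), Function.Injective t →
      Function.Bijective
        (fun l : Fin r → F => fun i : Fin r => codeword v m l (t i)))
    ∧ (∀ t : Fin r → Fin k, Function.Injective t →
        (∀ z : Fin r → F,
          pmfProb
            (fun _ : (Fin (k - r) → F) × (Fin r → F) =>
              (Fintype.card ((Fin (k - r) → F) × (Fin r → F)) : ℝ)⁻¹)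
            (fun ω (i : Fin r) => codeword v ω.1 ω.2 (t i)) z
          = ((Fintype.card F : ℝ) ^ r)⁻¹)
        ∧ mutInfo
            (fun _ : (Fin (k - r) → F) × (Fin r → F) =>
              (Fintype.card ((Fin (k - r) → F) × (Fin r → F)) : ℝ)⁻¹)
            Prod.fst (fun ω (i : Fin r) => codeword v ω.1 ω.2 (t i)) = 0) := by
  have hbij m t (ht : Injective t) := bijective_codeword_comp hrk.le hv m (hinv t ht)
  refine ⟨hbij, fun t ht => ?_⟩
  set Φ := fun ω : (Fin (k - r) → F) × (Fin r → F) =>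
    (ω.1, fun i => codeword v ω.1 ω.2 (t i))
  have hΦ : Bijective Φ := bijective_fst_prodMk fun m => hbij m t ht
  have hZ z : pmfProb _ (Prod.snd ∘ Φ) z = (Fintype.card (Fin r → F) : ℝ)⁻¹ :=
    (pmfProb_comp_of_bijective _ _ hΦ (fun _ => rfl) z).trans (pmfProb_uniform_snd z)
  refine ⟨fun z => (hZ z).trans (by simp), ?_⟩
  exact mutInfo_eq_zero_of_uniform _ _ _ pmfProb_uniform_fst hZ
    (pmfProb_const_of_bijective _ hΦ)

/-- secrecy of the wiretap channel II code. For every message `m` and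
every injective choice `t` of `r` eavesdropped coordinates, the map sending the
randomness `l` to the eavesdropped coordinates of the codeword is a bijection;
consequently, when the randomness is uniform and independent of the (uniform) message,
any `r` eavesdropped coordinates are uniformly distributed and carry no information
about the message (`I(M ; Z_t) = 0`). -/
theorem wiretapII_secrecy {F : Type*} [Field F] [Fintype F] [DecidableEq F]
    (k r : ℕ) (hr : 1 ≤ r) (hrk : r < k)
    (v : Fin r → Fin k → F)
    (hv : ∀ i j : Fin r, v i (Fin.castLE hrk.le j) = if i = j then 1 else 0)
    (hinv : ∀ t : Fin r → Fin k, Function.Injective t →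
      IsUnit (Matrix.of fun i j : Fin r => v i (t j)).det) :
    (∀ (m : Fin (k - r) → F) (t : Fin r → Fin k), Function.Injective t →
      Function.Bijective
        (fun l : Fin r → F => fun i : Fin r => codeword v m l (t i)))
    ∧ (∀ t : Fin r → Fin k, Function.Injective t →
        (∀ z : Fin r → F,
          pmfProb
            (fun _ : (Fin (k - r) → F) × (Fin r → F) =>
              (Fintype.card ((Fin (k - r) → F) × (Fin r → F)) : ℝ)⁻¹)
            (fun ω (i : Fin r) => codeword v ω.1 ω.2 (t i)) z
          = ((Fintype.card F : ℝ) ^ r)⁻¹)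
        ∧ mutInfo
            (fun _ : (Fin (k - r) → F) × (Fin r → F) =>
              (Fintype.card ((Fin (k - r) → F) × (Fin r → F)) : ℝ)⁻¹)
            Prod.fst (fun ω (i : Fin r) => codeword v ω.1 ω.2 (t i)) = 0) :=
  wiretapII_secrecy_general k r hrk v hv hinv
end
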